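/- Feasibility characterization: a Lipschitz function w on [0,s_f] satisfies the constraints μ⁻ ≤ w ≤ μ⁺ and α⁻ ≤ w' ≤ α⁺ a.e. if and only if μ⁻ ≤ w ≤ μ⁺ and M̄(w) = w. -/

import Mathlib

/-!
Taking `y = x` shows `w x` belongs to the set whose infimum is `M̄(w)(x)`, and that set is bounded
below because `w` is continuous and `α±` are integrable; so `M̄(w) = w` says
exactly that `w x ≤ w y + A(y,x)` for all `x, y`, i.e. that every increment `w y - w x` (`x ≤ y`)
lies between `∫_x^y α⁻` and `∫_x^y α⁺`. For a Lipschitz, hence absolutely continuous, `w` these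
increment bounds are equivalent to `α⁻ ≤ w' ≤ α⁺` a.e.: one direction is the fundamental theorem
of calculus for `w`; conversely `u ↦ ∫_0^u α⁺ - w u` is monotone, and by Lebesgue's
differentiation theorem its derivative is `α⁺ - w'` almost everywhere.
-/

open MeasureTheory Set

/-- `A(y,x) = ∫_y^x α⁺` if `y ≤ x`, and `∫_x^y (−α⁻)` if `y > x`. -/
noncomputable def A2 (αp αm : ℝ → ℝ) (y x : ℝ) : ℝ :=
  if y ≤ x then ∫ t in y..x, αp t else ∫ t in x..y, (-αm t)

/-- The meet operator `M̄(w)(x) = inf_{y ∈ [0,s_f]} { w(y) + A(y,x) }`. -/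
noncomputable def Mbar (sf : ℝ) (αp αm : ℝ → ℝ) (w : ℝ → ℝ) : ℝ → ℝ :=
  fun x => sInf {z : ℝ | ∃ y ∈ Icc (0:ℝ) sf, z = w y + A2 αp αm y x}

open Filter intervalIntegral

section
variable {w f : ℝ → ℝ} {a b : ℝ} {K : NNReal}

lemma LipschitzOnWith.sub_le_integral_of_ae_derivWithin_le
    (hw : LipschitzOnWith K w (Icc a b)) (hf : IntervalIntegrable f volume a b)
    (h : ∀ᵐ s, s ∈ Icc a b → derivWithin w (Icc a b) s ≤ f s)
    {x y : ℝ} (hx : x ∈ Icc a b) (hy : y ∈ Icc a b) (hxy : x ≤ y) :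
    w y - w x ≤ ∫ t in x..y, f t := by
  have hsub : uIcc x y ⊆ Icc a b := uIcc_subset_Icc hx hy
  have hac := (hw.mono hsub).absolutelyContinuousOnInterval
  have hderiv : ∀ᵐ t ∂volume.restrict (Icc x y), deriv w t ≤ f t := by
    rw [ae_restrict_iff' measurableSet_Icc]
    filter_upwards [h, (Ioo_ae_eq_Icc (μ := volume)).symm.le] with t ht hIoo htxy
    have htab : t ∈ Icc a b := Icc_subset_Icc hx.1 hy.2 htxy
    rw [← derivWithin_of_mem_nhds (Icc_mem_nhds (hIoo htab).1 (hIoo htab).2)]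
    exact ht htab
  rw [← hac.integral_deriv_eq_sub]
  exact integral_mono_ae_restrict hxy hac.intervalIntegrable_deriv
    (hf.mono_set (by rwa [uIcc_of_le (hx.1.trans hx.2)])) hderiv

lemma LipschitzOnWith.ae_derivWithin_le_of_sub_le_integral
    (hw : LipschitzOnWith K w (Icc a b)) (hf : IntervalIntegrable f volume a b)
    (h : ∀ x ∈ Icc a b, ∀ y ∈ Icc a b, x ≤ y → w y - w x ≤ ∫ t in x..y, f t) :
    ∀ᵐ s, s ∈ Icc a b → derivWithin w (Icc a b) s ≤ f s := by
  have hmono : MonotoneOn (fun u => (∫ t in a..u, f t) - w u) (Icc a b) := by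
    intro x hx y hy hxy
    have hinc := h x hx y hy hxy
    have hi : ∀ u ∈ Icc a b, IntervalIntegrable f volume a u := fun u hu =>
      hf.mono_set (uIcc_subset_uIcc left_mem_uIcc (Icc_subset_uIcc hu))
    have := integral_interval_sub_left (hi y hy) (hi x hx)
    dsimp only
    linarith
  filter_upwards [hw.ae_differentiableWithinAt_of_mem_real, hf.ae_hasDerivAt_integral,
    (Ioo_ae_eq_Icc (μ := volume)).symm.le] with s hdiff hF hIoo hs
  have hab : a < b := (hIoo hs).1.trans (hIoo hs).2
  have hF' : HasDerivAt (fun u => ∫ t in a..u, f t) (f s) s :=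
    hF (Icc_subset_uIcc hs) a left_mem_uIcc
  have := hmono.derivWithin_nonneg (x := s)
  rw [derivWithin_fun_sub hF'.differentiableAt.differentiableWithinAt (hdiff hs),
    hF'.hasDerivWithinAt.derivWithin (uniqueDiffOn_Icc hab s hs)] at this
  linarith

theorem LipschitzOnWith.ae_derivWithin_le_iff
    (hw : LipschitzOnWith K w (Icc a b)) (hf : IntervalIntegrable f volume a b) :
    (∀ᵐ s, s ∈ Icc a b → derivWithin w (Icc a b) s ≤ f s) ↔
      ∀ x ∈ Icc a b, ∀ y ∈ Icc a b, x ≤ y → w y - w x ≤ ∫ t in x..y, f t :=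
  ⟨fun h _ hx _ hy hxy => hw.sub_le_integral_of_ae_derivWithin_le hf h hx hy hxy,
    hw.ae_derivWithin_le_of_sub_le_integral hf⟩

theorem LipschitzOnWith.ae_le_derivWithin_iff
    (hw : LipschitzOnWith K w (Icc a b)) (hf : IntervalIntegrable f volume a b) :
    (∀ᵐ s, s ∈ Icc a b → f s ≤ derivWithin w (Icc a b) s) ↔
      ∀ x ∈ Icc a b, ∀ y ∈ Icc a b, x ≤ y → ∫ t in x..y, f t ≤ w y - w x := by
  have := (lipschitzOnWith_neg_iff.mpr hw).ae_derivWithin_le_iff hf.neg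
  simp only [derivWithin.neg, Pi.neg_apply, neg_le_neg_iff, intervalIntegral.integral_neg] at this
  refine this.trans (forall₂_congr fun x _ => forall₂_congr fun y _ => imp_congr_right fun _ => ?_)
  rw [le_neg, neg_sub_neg, neg_sub]

end

lemma abs_integral_le_integral_abs_of_le_of_le {f : ℝ → ℝ} {a b c d : ℝ}
    (hf : IntervalIntegrable f volume a b) (hac : a ≤ c) (hcd : c ≤ d) (hdb : d ≤ b) :
    |∫ t in c..d, f t| ≤ ∫ t in a..b, |f t| :=
  (abs_integral_le_integral_abs hcd).trans <|
    integral_mono_interval hac hcd hdb (Eventually.of_forall fun _ => abs_nonneg _) hf.abs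

section
variable {αp αm w : ℝ → ℝ}

lemma A2_self (x : ℝ) : A2 αp αm x x = 0 := by simp [A2]

lemma neg_integral_abs_le_A2 {a b x y : ℝ} (hip : IntervalIntegrable αp volume a b)
    (him : IntervalIntegrable αm volume a b) (hx : x ∈ Icc a b) (hy : y ∈ Icc a b) :
    -((∫ t in a..b, |αp t|) + ∫ t in a..b, |αm t|) ≤ A2 αp αm y x := by
  have hp0 : 0 ≤ ∫ t in a..b, |αp t| := integral_nonneg (hx.1.trans hx.2) fun _ _ => abs_nonneg _
  have hm0 : 0 ≤ ∫ t in a..b, |αm t| := integral_nonneg (hx.1.trans hx.2) fun _ _ => abs_nonneg _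
  unfold A2
  split_ifs with hyx
  · have := abs_integral_le_integral_abs_of_le_of_le hip hy.1 hyx hx.2
    linarith [neg_abs_le (∫ t in y..x, αp t)]
  · have := abs_integral_le_integral_abs_of_le_of_le him hx.1 (not_le.1 hyx).le hy.2
    rw [intervalIntegral.integral_neg]
    linarith [le_abs_self (∫ t in x..y, αm t)]

lemma forall_le_add_A2_iff {S : Set ℝ} :
    (∀ x ∈ S, ∀ y ∈ S, w x ≤ w y + A2 αp αm y x) ↔
      (∀ x ∈ S, ∀ y ∈ S, x ≤ y → ∫ t in x..y, αm t ≤ w y - w x) ∧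
        ∀ x ∈ S, ∀ y ∈ S, x ≤ y → w y - w x ≤ ∫ t in x..y, αp t := by
  constructor
  · intro h
    refine ⟨fun x hx y hy hxy => ?_, fun x hx y hy hxy => ?_⟩
    · rcases hxy.eq_or_lt with rfl | hlt
      · simp
      · have := h x hx y hy
        rw [A2, if_neg (not_le.2 hlt), intervalIntegral.integral_neg] at this
        linarith
    · have := h y hy x hx
      rw [A2, if_pos hxy] at this
      linarith
  · rintro ⟨hlo, hhi⟩ x hx y hy
    unfold A2
    split_ifs with hyx
    · linarith [hhi y hy x hx hyx]
    · rw [intervalIntegral.integral_neg]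
      linarith [hlo x hx y hy (not_le.1 hyx).le]

lemma bddBelow_setOf_add_A2 {sf x : ℝ} (hw : ContinuousOn w (Icc 0 sf))
    (hip : IntervalIntegrable αp volume 0 sf) (him : IntervalIntegrable αm volume 0 sf)
    (hx : x ∈ Icc 0 sf) :
    BddBelow {z : ℝ | ∃ y ∈ Icc (0:ℝ) sf, z = w y + A2 αp αm y x} := by
  obtain ⟨m, hm⟩ := isCompact_Icc.bddBelow_image hw
  refine ⟨m - ((∫ t in 0..sf, |αp t|) + ∫ t in 0..sf, |αm t|), ?_⟩
  rintro z ⟨y, hy, rfl⟩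
  linarith [hm ⟨y, hy, rfl⟩, neg_integral_abs_le_A2 hip him hx hy]

lemma Mbar_eq_self_iff {sf x : ℝ} (hx : x ∈ Icc 0 sf)
    (hbdd : BddBelow {z : ℝ | ∃ y ∈ Icc (0:ℝ) sf, z = w y + A2 αp αm y x}) :
    Mbar sf αp αm w x = w x ↔ ∀ y ∈ Icc 0 sf, w x ≤ w y + A2 αp αm y x := by
  have hmem : w x ∈ {z : ℝ | ∃ y ∈ Icc (0:ℝ) sf, z = w y + A2 αp αm y x} :=
    ⟨x, hx, by rw [A2_self, add_zero]⟩
  constructor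
  · intro h y hy
    rw [← h]
    exact csInf_le hbdd ⟨y, hy, rfl⟩
  · intro h
    refine le_antisymm (csInf_le hbdd hmem) (le_csInf ⟨_, hmem⟩ ?_)
    rintro z ⟨y, hy, rfl⟩
    exact h y hy

end

theorem stmt_16_general (sf : ℝ) (αp αm μm μp w : ℝ → ℝ) (K : NNReal)
    (hip : IntervalIntegrable αp volume 0 sf)
    (him : IntervalIntegrable αm volume 0 sf)
    (hw : LipschitzOnWith K w (Icc (0:ℝ) sf)) :
    ((∀ s ∈ Icc (0:ℝ) sf, μm s ≤ w s ∧ w s ≤ μp s) ∧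
      (∀ᵐ s ∂volume, s ∈ Icc (0:ℝ) sf →
        αm s ≤ derivWithin w (Icc (0:ℝ) sf) s ∧
        derivWithin w (Icc (0:ℝ) sf) s ≤ αp s))
    ↔ ((∀ s ∈ Icc (0:ℝ) sf, μm s ≤ w s ∧ w s ≤ μp s) ∧
      (∀ x ∈ Icc (0:ℝ) sf, Mbar sf αp αm w x = w x)) := by
  refine and_congr_right fun _ => ?_
  simp only [imp_and, eventually_and]
  rw [hw.ae_le_derivWithin_iff him, hw.ae_derivWithin_le_iff hip, ← forall_le_add_A2_iff]
  exact forall₂_congr fun x hx =>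
    (Mbar_eq_self_iff hx (bddBelow_setOf_add_A2 hw.continuousOn hip him hx)).symm

/-- Feasibility characterization: a Lipschitz `w` satisfies `μ⁻ ≤ w ≤ μ⁺` and
`α⁻ ≤ w' ≤ α⁺` a.e. iff `μ⁻ ≤ w ≤ μ⁺` and `M̄(w) = w`. -/
theorem stmt_16 (sf : ℝ) (hsf : 0 < sf) (αp αm μm μp w : ℝ → ℝ) (K : NNReal)
    (hip : IntervalIntegrable αp volume 0 sf)
    (him : IntervalIntegrable αm volume 0 sf)
    (hp : ∀ s ∈ Icc (0:ℝ) sf, 0 ≤ αp s)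
    (hm : ∀ s ∈ Icc (0:ℝ) sf, αm s ≤ 0)
    (hμm0 : ∀ s ∈ Icc (0:ℝ) sf, 0 ≤ μm s)
    (hw : LipschitzOnWith K w (Icc (0:ℝ) sf)) :
    ((∀ s ∈ Icc (0:ℝ) sf, μm s ≤ w s ∧ w s ≤ μp s) ∧
      (∀ᵐ s ∂volume, s ∈ Icc (0:ℝ) sf →
        αm s ≤ derivWithin w (Icc (0:ℝ) sf) s ∧
        derivWithin w (Icc (0:ℝ) sf) s ≤ αp s))
    ↔ ((∀ s ∈ Icc (0:ℝ) sf, μm s ≤ w s ∧ w s ≤ μp s) ∧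
      (∀ x ∈ Icc (0:ℝ) sf, Mbar sf αp αm w x = w x)) :=
  stmt_16_general sf αp αm μm μp w K hip him hw
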